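/- arXiv:2511.12771 — 5 statements merged into one kernel-verified Lean document; each statement's English description precedes it below -/
import Mathlib

section
/- Let A, B in SL(2,ℝ) and set a = tr(A), b = tr(B), c = tr(AB). If tr(ABA⁻¹B⁻¹) = −2, then a² + b² + c² − abc = 0. -/
/-!
On `SL(2)` inverses are adjugates, and expanding entries gives Fricke's trace identity
`tr(ABA⁻¹B⁻¹) = a² + b² + c² − abc − 2`; so commutator trace `−2` is exactly `a² + b² + c² = abc`.
-/

open Matrix

namespace Matrix

variable {R : Type*} [CommRing R]

theorem trace_mul_mul_adjugate_mul_adjugate_fin_two (A B : Matrix (Fin 2) (Fin 2) R) :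
    (A * B * A.adjugate * B.adjugate).trace =
      A.trace ^ 2 * B.det + B.trace ^ 2 * A.det + (A * B).trace ^ 2
        - A.trace * B.trace * (A * B).trace - 2 * A.det * B.det := by
  simp only [trace_fin_two, det_fin_two, adjugate_fin_two, mul_apply, Fin.sum_univ_two,
    of_apply, cons_val', cons_val_zero, cons_val_one, empty_val', cons_val_fin_one]
  ring

theorem inv_eq_adjugate_of_det_eq_one {n : Type*} [Fintype n] [DecidableEq n]
    {A : Matrix n n R} (hA : A.det = 1) : A⁻¹ = A.adjugate := by
  rw [inv_def, hA, Ring.inverse_one, one_smul]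

theorem trace_commutator_fin_two_of_det_eq_one {A B : Matrix (Fin 2) (Fin 2) R}
    (hA : A.det = 1) (hB : B.det = 1) :
    (A * B * A⁻¹ * B⁻¹).trace =
      A.trace ^ 2 + B.trace ^ 2 + (A * B).trace ^ 2 - A.trace * B.trace * (A * B).trace - 2 := by
  rw [inv_eq_adjugate_of_det_eq_one hA, inv_eq_adjugate_of_det_eq_one hB,
    trace_mul_mul_adjugate_mul_adjugate_fin_two, hA, hB]
  ring

end Matrix

/-- Let `A, B ∈ SL(2,ℝ)` and set `a = tr(A)`, `b = tr(B)`, `c = tr(AB)`.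
If `tr(ABA⁻¹B⁻¹) = −2`, then `a² + b² + c² − abc = 0`. -/
theorem sl2_markov_equation (A B : Matrix (Fin 2) (Fin 2) ℝ)
    (hA : A.det = 1) (hB : B.det = 1)
    (a b c : ℝ) (ha : a = A.trace) (hb : b = B.trace) (hc : c = (A * B).trace)
    (hcomm : (A * B * A⁻¹ * B⁻¹).trace = -2) :
    a ^ 2 + b ^ 2 + c ^ 2 - a * b * c = 0 := by
  rw [trace_commutator_fin_two_of_det_eq_one hA hB, ← ha, ← hb, ← hc] at hcomm
  linarith
end

section
/- Every Markov triple can be obtained from the triple (1,1,1) by finitely many applications of the three mutation moves (a,b,c) ↦ (3bc − a, b, c), (a,b,c) ↦ (a, 3ac − b, c), and (a,b,c) ↦ (a, b, 3ab − c). Formally: the set of Markov triples is contained in the reflexive–transitive closure of these three moves applied starting from (1,1,1). -/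
/-!
Descent by Vieta jumping. For a Markov triple with largest entry `c`, the other root
`c' = 3ab - c` of `x² - 3ab·x + a² + b²` satisfies `c·c' = a² + b² > 0` and, unless the
triple is `(1,1,1)`, `c' < c`. Mutating the largest entry therefore gives a Markov triple
with smaller sum, and since each move is an involution the original triple is one move away
from it; induction on `a + b + c` ends at `(1,1,1)`.
-/

/-- One mutation move on triples of integers: replace one entry `x` of `(a,b,c)` by
`3·(product of the other two) − x`. -/
def markovStep (p q : ℤ × ℤ × ℤ) : Prop :=
  q = (3 * p.2.1 * p.2.2 - p.1, p.2.1, p.2.2) ∨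
  q = (p.1, 3 * p.1 * p.2.2 - p.2.1, p.2.2) ∨
  q = (p.1, p.2.1, 3 * p.1 * p.2.1 - p.2.2)

def IsMarkovTriple (a b c : ℤ) : Prop :=
  0 < a ∧ 0 < b ∧ 0 < c ∧ a ^ 2 + b ^ 2 + c ^ 2 = 3 * a * b * c

namespace IsMarkovTriple

variable {a b c : ℤ}

theorem mutation_pos (h : IsMarkovTriple a b c) : 0 < 3 * a * b - c := by
  obtain ⟨ha, hb, hc, h⟩ := h
  have hprod : c * (3 * a * b - c) = a ^ 2 + b ^ 2 := by linear_combination -h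
  exact pos_of_mul_pos_right (hprod ▸ by positivity) hc.le

theorem mutation_lt (h : IsMarkovTriple a b c) (hac : a ≤ c) (hbc : b ≤ c) (hc : 1 < c) :
    3 * a * b - c < c := by
  obtain ⟨ha, hb, -, h⟩ := h
  by_contra! hle
  -- With `q x = (x - c) * (x - (3ab - c)) = x² - 3ab·x + a² + b²`, these say `q b ≥ 0` and
  -- `q a ≥ 0`, i.e. `3ab² ≤ a² + 2b²` and `3a²b ≤ 2a² + b²`, which force `a = b = 1`.
  have hb' : 0 ≤ (c - b) * (3 * a * b - c - b) := mul_nonneg (by linarith) (by linarith)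
  have ha' : 0 ≤ (c - a) * (3 * a * b - c - a) := mul_nonneg (by linarith) (by linarith)
  nlinarith [mul_pos ha hb]

theorem rotate (h : IsMarkovTriple a b c) : IsMarkovTriple b c a := by
  obtain ⟨ha, hb, hc, h⟩ := h
  exact ⟨hb, hc, ha, by linear_combination h⟩

theorem mutate_max (h : IsMarkovTriple a b c) (hac : a ≤ c) (hbc : b ≤ c) (hc : 1 < c) :
    IsMarkovTriple a b (3 * a * b - c) ∧ 3 * a * b - c < c :=
  ⟨⟨h.1, h.2.1, h.mutation_pos, by linear_combination h.2.2.2⟩, h.mutation_lt hac hbc hc⟩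

theorem exists_markovStep_of_ne_one (h : IsMarkovTriple a b c) (hne : (a, b, c) ≠ (1, 1, 1)) :
    ∃ a' b' c', IsMarkovTriple a' b' c' ∧ a' + b' + c' < a + b + c ∧
      markovStep (a', b', c') (a, b, c) := by
  have ⟨ha, hb, hc, _⟩ := h
  simp only [ne_eq, Prod.mk.injEq] at hne
  by_cases hcmax : a ≤ c ∧ b ≤ c
  · obtain ⟨hm, hlt⟩ := h.mutate_max hcmax.1 hcmax.2 (by omega)
    exact ⟨a, b, _, hm, by linarith, .inr <| .inr <| Prod.ext rfl <| Prod.ext rfl <| by ring⟩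
  by_cases hbmax : c ≤ b ∧ a ≤ b
  · obtain ⟨hm, hlt⟩ := h.rotate.rotate.mutate_max hbmax.1 hbmax.2 (by omega)
    exact ⟨_, _, _, hm.rotate, by linarith, .inr <| .inl <| Prod.ext rfl <| Prod.ext (by ring) rfl⟩
  · obtain ⟨hm, hlt⟩ := h.rotate.mutate_max (by omega) (by omega) (by omega)
    exact ⟨_, _, _, hm.rotate.rotate, by linarith, .inl <| Prod.ext (by ring) rfl⟩

end IsMarkovTriple

theorem IsMarkovTriple.reflTransGen_markovStep {a b c : ℤ} (h : IsMarkovTriple a b c) :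
    Relation.ReflTransGen markovStep (1, 1, 1) (a, b, c) := by
  by_cases hne : (a, b, c) = (1, 1, 1)
  · exact hne ▸ .refl
  obtain ⟨a', b', c', h', hlt, hstep⟩ := h.exists_markovStep_of_ne_one hne
  exact h'.reflTransGen_markovStep.tail hstep
termination_by (a + b + c).toNat
decreasing_by have := h'.1; have := h'.2.1; have := h'.2.2.1; omega

/-- Every Markov triple (positive integers with `a² + b² + c² = 3abc`) can be obtained
from `(1,1,1)` by finitely many applications of the three mutation moves; i.e. it lies in
the reflexive–transitive closure of the moves starting from `(1,1,1)`. -/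
theorem markov_triples_from_trivial (a b c : ℤ) (ha : 0 < a) (hb : 0 < b) (hc : 0 < c)
    (h : a ^ 2 + b ^ 2 + c ^ 2 = 3 * a * b * c) :
    Relation.ReflTransGen markovStep (1, 1, 1) (a, b, c) :=
  IsMarkovTriple.reflTransGen_markovStep ⟨ha, hb, hc, h⟩
end

section
/- Let (𝒜,σ) be a unital ring with anti-involution. For all M, N ∈ Mat₂(𝒜), the non-commutative classical trace identity holds: tr(Adj(M)·N) + tr(σ(M)·N) − σ(tr(M))·tr(N) = 0, where Adj([[A,B],[C,D]]) = [[σ(D),−σ(B)],[−σ(C),σ(A)]] and σ(M) denotes entrywise application of σ. -/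
/-! `Adj(M) + σ(M)` is the scalar matrix `σ(tr M)`, so the identity is linearity of the trace. -/

open Matrix

/-- The adjoint matrix `Adj([[A,B],[C,D]]) = [[σ(D),−σ(B)],[−σ(C),σ(A)]]` of a
`2 × 2` matrix over a ring with anti-involution `σ = star`. -/
def adjMat {𝒜 : Type*} [Ring 𝒜] [StarRing 𝒜] (M : Matrix (Fin 2) (Fin 2) 𝒜) :
    Matrix (Fin 2) (Fin 2) 𝒜 :=
  !![star (M 1 1), -star (M 0 1); -star (M 1 0), star (M 0 0)]

theorem adjMat_add_map_star {𝒜 : Type*} [Ring 𝒜] [StarRing 𝒜]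
    (M : Matrix (Fin 2) (Fin 2) 𝒜) :
    adjMat M + M.map star = diagonal fun _ => star M.trace := by
  ext i j
  fin_cases i <;> fin_cases j <;>
    simp [adjMat, trace_fin_two, diagonal, add_comm]

/-- Let `(𝒜,σ)` be a unital ring with anti-involution.  For all `M, N ∈ Mat₂(𝒜)`,
the non-commutative classical trace identity holds:
`tr(Adj(M)·N) + tr(σ(M)·N) − σ(tr(M))·tr(N) = 0`, where `σ(M)` denotes entrywise
application of `σ` and `tr(M)` is the sum of the diagonal entries. -/
theorem noncommutative_trace_identity {𝒜 : Type*} [Ring 𝒜] [StarRing 𝒜]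
    (M N : Matrix (Fin 2) (Fin 2) 𝒜) :
    (adjMat M * N).trace + ((M.map star) * N).trace - star M.trace * N.trace = 0 := by
  rw [← trace_add, ← add_mul, adjMat_add_map_star, ← smul_eq_diagonal_mul, trace_smul,
    smul_eq_mul, sub_self]
end

section
/- Let R be a unital ring and M = [[A,B],[C,D]] ∈ Mat₂(R). Then M is a Manin matrix with AD − CB = 1 if and only if M satisfies the Cayley–Hamilton identity M² − tr(M)·M + I₂ = 0, where tr(M) = A + D acts by left scalar multiplication. -/
open Matrix

/-! Expanding `M² - tr(M) • M + 1` entrywise, the squares `A²` and `D²` cancel against the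
trace terms, leaving the four Manin-type defects `1 - (DA - BC)`, `BD - DB`, `CA - AC` and
`1 - (AD - CB)`. The two determinant conditions together are the third Manin relation. -/

theorem Matrix.fin_two_eq_zero_iff {R : Type*} [Zero R] (a b c d : R) :
    !![a, b; c, d] = 0 ↔ a = 0 ∧ b = 0 ∧ c = 0 ∧ d = 0 := by
  rw [← Matrix.ext_iff]
  simp [Fin.forall_fin_two, and_assoc]

theorem Matrix.sq_sub_trace_smul_add_one_fin_two {R : Type*} [Ring R] (A B C D : R) :
    !![A, B; C, D] * !![A, B; C, D] - (!![A, B; C, D].trace) • !![A, B; C, D] + 1 =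
      !![1 - (D * A - B * C), B * D - D * B; C * A - A * C, 1 - (A * D - C * B)] := by
  rw [mul_fin_two, trace_fin_two_of, smul_of, one_fin_two]
  ext i j
  fin_cases i <;> fin_cases j <;> simp <;> noncomm_ring

/-- Let `R` be a unital ring and `M = [[A,B],[C,D]] ∈ Mat₂(R)`.  Then `M` is a Manin
matrix (`AC = CA`, `BD = DB`, `AD − CB = DA − BC`) with `AD − CB = 1` if and only if `M`
satisfies the Cayley–Hamilton identity `M² − tr(M)·M + I₂ = 0`, where `tr(M) = A + D`
acts by left scalar multiplication. -/
theorem manin_det_one_iff_cayley_hamilton {R : Type*} [Ring R] (A B C D : R) :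
    (A * C = C * A ∧ B * D = D * B ∧ A * D - C * B = D * A - B * C ∧
        A * D - C * B = 1) ↔
      (!![A, B; C, D] : Matrix (Fin 2) (Fin 2) R) * !![A, B; C, D]
          - ((!![A, B; C, D] : Matrix (Fin 2) (Fin 2) R).trace) • !![A, B; C, D]
          + 1 = 0 := by
  rw [sq_sub_trace_smul_add_one_fin_two, fin_two_eq_zero_iff]
  simp only [sub_eq_zero, eq_comm (a := (1 : R)), eq_comm (a := C * A)]
  constructor
  · rintro ⟨hAC, hBD, hManin, hDet⟩
    exact ⟨hManin ▸ hDet, hBD, hAC, hDet⟩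
  · rintro ⟨hDet', hBD, hAC, hDet⟩
    exact ⟨hAC, hBD, hDet.trans hDet'.symm, hDet⟩
end

section
/- Let R be a unital ring in which 2 is not a zero divisor on R (i.e. 2x = 0 implies x = 0), and let M = [[A,B],[C,D]] ∈ Mat₂(R). If both M and its transpose Mᵀ = [[A,C],[B,D]] are Manin matrices, then the four entries A, B, C, D pairwise commute. -/
/-! The sum and the difference of the two cross relations `AD - CB = DA - BC` and
`AD - BC = DA - CB` are `2 (AD - DA) = 0` and `2 (BC - CB) = 0`. -/

section CrossRelations

variable {R : Type*} [Ring R] {A B C D : R}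

lemma two_mul_sub_eq_zero_of_cross_relations (h₁ : A * D - C * B = D * A - B * C)
    (h₂ : A * D - B * C = D * A - C * B) :
    2 * (A * D - D * A) = 0 ∧ 2 * (B * C - C * B) = 0 := by
  have h₁' : A * D - C * B - (D * A - B * C) = 0 := sub_eq_zero.mpr h₁
  have h₂' : A * D - B * C - (D * A - C * B) = 0 := sub_eq_zero.mpr h₂
  constructor
  · calc 2 * (A * D - D * A)
        = (A * D - C * B - (D * A - B * C)) + (A * D - B * C - (D * A - C * B)) := by
          noncomm_ring
      _ = 0 := by rw [h₁', h₂', add_zero]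
  · calc 2 * (B * C - C * B)
        = (A * D - C * B - (D * A - B * C)) - (A * D - B * C - (D * A - C * B)) := by
          noncomm_ring
      _ = 0 := by rw [h₁', h₂', sub_zero]

end CrossRelations

lemma eq_of_two_mul_sub_eq_zero {R : Type*} [Ring R] (h2 : ∀ x : R, 2 * x = 0 → x = 0)
    {x y : R} (h : 2 * (x - y) = 0) : x = y :=
  sub_eq_zero.mp (h2 _ h)

/-- Let `R` be a unital ring in which `2` is not a zero divisor (i.e. `2x = 0` implies
`x = 0`), and let `M = [[A,B],[C,D]] ∈ Mat₂(R)`.  If both `M` and its transpose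
`Mᵀ = [[A,C],[B,D]]` are Manin matrices, then the entries `A, B, C, D` pairwise
commute. -/
theorem manin_and_transpose_manin_commute {R : Type*} [Ring R]
    (h2 : ∀ x : R, 2 * x = 0 → x = 0) (A B C D : R)
    (hM : A * C = C * A ∧ B * D = D * B ∧ A * D - C * B = D * A - B * C)
    (hMT : A * B = B * A ∧ C * D = D * C ∧ A * D - B * C = D * A - C * B) :
    A * B = B * A ∧ A * C = C * A ∧ A * D = D * A ∧
      B * C = C * B ∧ B * D = D * B ∧ C * D = D * C := by
  obtain ⟨hAC, hBD, hcross⟩ := hM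
  obtain ⟨hAB, hCD, hcross'⟩ := hMT
  obtain ⟨hAD, hBC⟩ := two_mul_sub_eq_zero_of_cross_relations hcross hcross'
  exact ⟨hAB, hAC, eq_of_two_mul_sub_eq_zero h2 hAD, eq_of_two_mul_sub_eq_zero h2 hBC, hBD, hCD⟩
end
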